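/- Let G = C₂ × C₂ be the Klein four-group. The ℤ-module of all Brauer relations in G is generated by Θ = 1 − C₂^a − C₂^b − C₂^c + 2·G, where C₂^a, C₂^b, C₂^c are the three subgroups of order 2. That is, if n assigns an integer n_H to each of the five subgroups H of G and for every g ∈ G one has ∑_H n_H · #{ xH ∈ G/H : g·xH = xH } = 0, then there exists m ∈ ℤ with n_1 = m, n_{C₂^a} = n_{C₂^b} = n_{C₂^c} = −m, and n_G = 2m. -/

import Mathlib

/-- The number of cosets in `G ⧸ H` fixed by left translation by `g`;
this is the value at `g` of the character of the permutation representation `ℂ[G/H]`. -/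
noncomputable def fixedCosets {G : Type*} [Group G] (g : G) (H : Subgroup G) : ℕ :=
  Nat.card {x : G ⧸ H // g • x = x}

/-! For a normal subgroup `H` the permutation character of `G ⧸ H` is `[G : H]` on `H` and `0`
off it. The five subgroups `⊥, A, B, C, ⊤` are normal and are all the subgroups of `G`, so
evaluating a relation at a nontrivial `a ∈ A` gives `2 n_A + n_G = 0`, likewise for `B` and `C`,
and evaluating it at `1` gives `4 n_1 + 2 (n_A + n_B + n_C) + n_G = 0`. -/

section

variable {G : Type*} [Group G]

theorem fixedCosets_one (H : Subgroup G) : fixedCosets 1 H = H.index := by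
  simp [fixedCosets, Subgroup.index]

theorem QuotientGroup.smul_eq_self_iff_mem {H : Subgroup G} [H.Normal] (g : G) (x : G ⧸ H) :
    g • x = x ↔ g ∈ H := by
  induction x using QuotientGroup.induction_on with
  | H x =>
    rw [MulAction.Quotient.smul_mk, smul_eq_mul, QuotientGroup.mk_mul, mul_eq_right,
      QuotientGroup.eq_one_iff]

theorem fixedCosets_of_mem {H : Subgroup G} [H.Normal] {g : G} (hg : g ∈ H) :
    fixedCosets g H = H.index := by
  simp [fixedCosets, QuotientGroup.smul_eq_self_iff_mem, hg, Subgroup.index]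

theorem fixedCosets_of_notMem {H : Subgroup G} [H.Normal] {g : G} (hg : g ∉ H) :
    fixedCosets g H = 0 := by
  simp [fixedCosets, QuotientGroup.smul_eq_self_iff_mem, hg]

theorem Subgroup.eq_zpowers_of_card_eq_prime {p : ℕ} (hp : p.Prime) {H : Subgroup G}
    (hH : Nat.card H = p) {x : G} (hxH : x ∈ H) (hx : x ≠ 1) : H = zpowers x := by
  have : Finite H := Nat.finite_of_card_ne_zero (hH ▸ hp.ne_zero)
  have hord : orderOf x = p :=
    (hp.eq_one_or_self_of_dvd _ (hH ▸ H.orderOf_dvd_natCard hxH)).resolve_left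
      (mt orderOf_eq_one_iff.1 hx)
  exact (eq_of_le_of_card_ge (zpowers_le.2 hxH) (by rw [Nat.card_zpowers, hord, hH])).symm

theorem Subgroup.eq_of_card_eq_prime_of_mem {p : ℕ} (hp : p.Prime) {H K : Subgroup G}
    (hH : Nat.card H = p) (hK : Nat.card K = p) {x : G} (hxH : x ∈ H) (hxK : x ∈ K)
    (hx : x ≠ 1) : H = K :=
  (H.eq_zpowers_of_card_eq_prime hp hH hxH hx).trans
    (K.eq_zpowers_of_card_eq_prime hp hK hxK hx).symm

theorem Subgroup.exists_ne_one_mem_of_card_eq_two {H : Subgroup G} (hH : Nat.card H = 2) :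
    ∃ x ∈ H, x ≠ 1 :=
  H.bot_or_exists_ne_one.resolve_left (by rintro rfl; simp at hH)

theorem eq_or_eq_of_natCard_eq_four {α : Type*} (hα : Nat.card α = 4) {o a b c : α}
    (ha : a ≠ o) (hb : b ≠ o) (hc : c ≠ o) (hab : a ≠ b) (hac : a ≠ c) (hbc : b ≠ c) (x : α) :
    x = o ∨ x = a ∨ x = b ∨ x = c := by
  classical
  have : Fintype α := @Fintype.ofFinite α (Nat.finite_of_card_ne_zero (by omega))
  have huniv : ({o, a, b, c} : Finset α) = Finset.univ := by
    refine Finset.eq_univ_of_card _ ?_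
    rw [← Nat.card_eq_fintype_card, hα]
    simp [ha.symm, hb.symm, hc.symm, hab, hac, hbc]
  simpa [← huniv] using Finset.mem_univ x

namespace Subgroup

theorem index_eq_two_of_card_eq_two (hG : Nat.card G = 4) {H : Subgroup G}
    (hH : Nat.card H = 2) : H.index = 2 := by
  have := H.card_mul_index
  rw [hH, hG] at this
  omega

variable {A B C : Subgroup G}

theorem eq_or_eq_or_eq_of_card_eq_two (hG : Nat.card G = 4) (hA : Nat.card A = 2)
    (hB : Nat.card B = 2) (hC : Nat.card C = 2) (hAB : A ≠ B) (hAC : A ≠ C) (hBC : B ≠ C)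
    {H : Subgroup G} (hH : Nat.card H = 2) : H = A ∨ H = B ∨ H = C := by
  have eq_of_mem {K L : Subgroup G} (hK : Nat.card K = 2) (hL : Nat.card L = 2) {x : G}
      (hxK : x ∈ K) (hxL : x ∈ L) (hx : x ≠ 1) : K = L :=
    eq_of_card_eq_prime_of_mem Nat.prime_two hK hL hxK hxL hx
  obtain ⟨a, haA, ha⟩ := exists_ne_one_mem_of_card_eq_two hA
  obtain ⟨b, hbB, hb⟩ := exists_ne_one_mem_of_card_eq_two hB
  obtain ⟨c, hcC, hc⟩ := exists_ne_one_mem_of_card_eq_two hC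
  obtain ⟨d, hdH, hd⟩ := exists_ne_one_mem_of_card_eq_two hH
  have hab : a ≠ b := by rintro rfl; exact hAB (eq_of_mem hA hB haA hbB ha)
  have hac : a ≠ c := by rintro rfl; exact hAC (eq_of_mem hA hC haA hcC ha)
  have hbc : b ≠ c := by rintro rfl; exact hBC (eq_of_mem hB hC hbB hcC hb)
  rcases eq_or_eq_of_natCard_eq_four hG ha hb hc hab hac hbc d with rfl | rfl | rfl | rfl
  · exact absurd rfl hd
  · exact Or.inl (eq_of_mem hH hA hdH haA hd)
  · exact Or.inr (Or.inl (eq_of_mem hH hB hdH hbB hd))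
  · exact Or.inr (Or.inr (eq_of_mem hH hC hdH hcC hd))

theorem eq_bot_or_eq_or_eq_top_of_card_eq_four (hG : Nat.card G = 4) (hA : Nat.card A = 2)
    (hB : Nat.card B = 2) (hC : Nat.card C = 2) (hAB : A ≠ B) (hAC : A ≠ C) (hBC : B ≠ C)
    (H : Subgroup G) : H = ⊥ ∨ H = A ∨ H = B ∨ H = C ∨ H = ⊤ := by
  have : Finite G := Nat.finite_of_card_ne_zero (by omega)
  have hdvd : Nat.card H ∣ 4 := hG ▸ H.card_subgroup_dvd_card
  have hcard : Nat.card H = 1 ∨ Nat.card H = 2 ∨ Nat.card H = 4 := by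
    have := Nat.le_of_dvd (by norm_num) hdvd
    interval_cases h : Nat.card H <;> simp_all
  rcases hcard with h | h | h
  · exact Or.inl (card_eq_one.1 h)
  · have := eq_or_eq_or_eq_of_card_eq_two hG hA hB hC hAB hAC hBC h
    tauto
  · exact Or.inr (Or.inr (Or.inr (Or.inr (eq_top_of_card_eq H (h.trans hG.symm)))))

theorem finsum_eq_of_card_eq_four (hG : Nat.card G = 4) (hA : Nat.card A = 2)
    (hB : Nat.card B = 2) (hC : Nat.card C = 2) (hAB : A ≠ B) (hAC : A ≠ C) (hBC : B ≠ C)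
    {M : Type*} [AddCommMonoid M] (f : Subgroup G → M) :
    ∑ᶠ H, f H = f ⊥ + f A + f B + f C + f ⊤ := by
  classical
  have ne_of_card_ne {H K : Subgroup G} (h : Nat.card H ≠ Nat.card K) : H ≠ K := by
    rintro rfl; exact h rfl
  have hbotA : ⊥ ≠ A := ne_of_card_ne (by simp [hA])
  have hbotB : ⊥ ≠ B := ne_of_card_ne (by simp [hB])
  have hbotC : ⊥ ≠ C := ne_of_card_ne (by simp [hC])
  have hbotT : (⊥ : Subgroup G) ≠ ⊤ := ne_of_card_ne (by simp [hG])
  have hAT : A ≠ ⊤ := ne_of_card_ne (by simp [hA, hG])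
  have hBT : B ≠ ⊤ := ne_of_card_ne (by simp [hB, hG])
  have hCT : C ≠ ⊤ := ne_of_card_ne (by simp [hC, hG])
  rw [finsum_eq_finsetSum_of_support_subset f (s := {⊥, A, B, C, ⊤}) fun H _ => by
    simpa using eq_bot_or_eq_or_eq_top_of_card_eq_four hG hA hB hC hAB hAC hBC H]
  simp [Finset.sum_insert, *, add_assoc]

end Subgroup

def IsBrauerRelation (n : Subgroup G → ℤ) : Prop :=
  ∀ g : G, ∑ᶠ H : Subgroup G, n H * (fixedCosets g H : ℤ) = 0

namespace IsBrauerRelation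

open Subgroup

variable {n : Subgroup G → ℤ} {A B C : Subgroup G}

theorem four_mul_bot_add_eq_zero (hrel : IsBrauerRelation n) (hG : Nat.card G = 4)
    (hA : Nat.card A = 2) (hB : Nat.card B = 2) (hC : Nat.card C = 2)
    (hAB : A ≠ B) (hAC : A ≠ C) (hBC : B ≠ C) :
    4 * n ⊥ + 2 * (n A + n B + n C) + n ⊤ = 0 := by
  have h := hrel 1
  simp only [finsum_eq_of_card_eq_four hG hA hB hC hAB hAC hBC, fixedCosets_one, index_bot,
    index_top, hG, index_eq_two_of_card_eq_two hG hA, index_eq_two_of_card_eq_two hG hB,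
    index_eq_two_of_card_eq_two hG hC] at h
  push_cast at h
  linarith

theorem two_mul_add_top_eq_zero (hrel : IsBrauerRelation n) (hG : Nat.card G = 4)
    (hA : Nat.card A = 2) (hB : Nat.card B = 2) (hC : Nat.card C = 2)
    (hAB : A ≠ B) (hAC : A ≠ C) (hBC : B ≠ C) :
    2 * n A + n ⊤ = 0 := by
  obtain ⟨a, haA, ha⟩ := exists_ne_one_mem_of_card_eq_two hA
  have haB : a ∉ B := fun h => hAB (eq_of_card_eq_prime_of_mem Nat.prime_two hA hB haA h ha)
  have haC : a ∉ C := fun h => hAC (eq_of_card_eq_prime_of_mem Nat.prime_two hA hC haA h ha)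
  have hiA := index_eq_two_of_card_eq_two hG hA
  have : A.Normal := normal_of_index_eq_two hiA
  have : B.Normal := normal_of_index_eq_two (index_eq_two_of_card_eq_two hG hB)
  have : C.Normal := normal_of_index_eq_two (index_eq_two_of_card_eq_two hG hC)
  have h := hrel a
  simp only [finsum_eq_of_card_eq_four hG hA hB hC hAB hAC hBC,
    fixedCosets_of_notMem (mt mem_bot.1 ha), fixedCosets_of_mem haA, fixedCosets_of_notMem haB,
    fixedCosets_of_notMem haC, fixedCosets_of_mem (mem_top a), hiA, index_top] at h
  push_cast at h
  linarith

end IsBrauerRelation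

end

theorem klein_brauer_relations_generated_general {G : Type*} [Group G]
    (hG : Nat.card G = 4)
    (A B C : Subgroup G) (hA : Nat.card A = 2) (hB : Nat.card B = 2) (hC : Nat.card C = 2)
    (hAB : A ≠ B) (hAC : A ≠ C) (hBC : B ≠ C)
    (n : Subgroup G → ℤ)
    (hrel : ∀ g : G, ∑ᶠ H : Subgroup G, n H * (fixedCosets g H : ℤ) = 0) :
    ∃ m : ℤ, n ⊥ = m ∧ n A = -m ∧ n B = -m ∧ n C = -m ∧ n ⊤ = 2 * m := by
  have hrel : IsBrauerRelation n := hrel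
  have hnA := hrel.two_mul_add_top_eq_zero hG hA hB hC hAB hAC hBC
  have hnB := hrel.two_mul_add_top_eq_zero hG hB hA hC hAB.symm hBC hAC
  have hnC := hrel.two_mul_add_top_eq_zero hG hC hA hB hAC.symm hBC.symm hAB
  have hn1 := hrel.four_mul_bot_add_eq_zero hG hA hB hC hAB hAC hBC
  exact ⟨n ⊥, rfl, by omega, by omega, by omega, by omega⟩

/-- Let `G` be the Klein four-group (a group of order 4 with three distinct
subgroups `A`, `B`, `C` of order 2, which together with `⊥` and `⊤` are its five subgroups).
Every Brauer relation in `G` is an integer multiple of `Θ = 1 − A − B − C + 2·G`: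
if `n` assigns an integer to each subgroup and the permutation characters cancel,
then there is `m ∈ ℤ` with `n ⊥ = m`, `n A = n B = n C = −m`, `n ⊤ = 2m`. -/
theorem klein_brauer_relations_generated {G : Type*} [Group G] [Finite G]
    (hG : Nat.card G = 4)
    (A B C : Subgroup G) (hA : Nat.card A = 2) (hB : Nat.card B = 2) (hC : Nat.card C = 2)
    (hAB : A ≠ B) (hAC : A ≠ C) (hBC : B ≠ C)
    (n : Subgroup G → ℤ)
    (hrel : ∀ g : G, ∑ᶠ H : Subgroup G, n H * (fixedCosets g H : ℤ) = 0) :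
    ∃ m : ℤ, n ⊥ = m ∧ n A = -m ∧ n B = -m ∧ n C = -m ∧ n ⊤ = 2 * m :=
  klein_brauer_relations_generated_general hG A B C hA hB hC hAB hAC hBC n hrel
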